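/- Let Σ_x be a real n×n positive semidefinite matrix, Φ a real ℓ×n matrix, and Σ := Σ_x^{1/2}·Φᵀ·Φ·Σ_x^{1/2}. If rank(Σ) < rank(Σ_x), then there exists a real number L > 0 such that MMSE(σ²) tends to L as σ² → 0⁺; that is, the MMSE exhibits a strictly positive error floor. -/

import Mathlib

/-!
Write `S = Σ_x^{1/2}` and `A = Φ S`, so that `Σ = AᵀA`. The push-through identity
`Aᵀ (σ² + AAᵀ)⁻¹ = (σ² + AᵀA)⁻¹ Aᵀ` turns the MMSE into `σ² tr((σ² + Σ)⁻¹ Σ_x)`. Diagonalising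
`Σ = U diag(d) Uᵀ` gives `MMSE(σ²) = ∑ᵢ σ²/(σ² + dᵢ) (Uᵀ Σ_x U)ᵢᵢ`, which tends to the sum of
`(Uᵀ Σ_x U)ᵢᵢ` over the zero eigenvalues `dᵢ`. These terms are `‖(S U) eᵢ‖²`; if they all vanished,
`S U` would factor through the `rank Σ` coordinates with `dᵢ ≠ 0`, giving
`rank Σ_x = rank S ≤ rank Σ`.
-/

open Matrix Filter Topology

/-- The positive semidefinite square root of a positive semidefinite matrix
(the definition `Matrix.PosSemidef.sqrt` of the older Mathlib, since removed). -/
noncomputable def Matrix.PosSemidef.sqrt {n : Type*} [Fintype n] [DecidableEq n]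
    {𝕜 : Type*} [RCLike 𝕜] [PartialOrder 𝕜] [StarOrderedRing 𝕜] {A : Matrix n n 𝕜} (hA : A.PosSemidef) : Matrix n n 𝕜 :=
  hA.1.eigenvectorUnitary.1 * diagonal ((↑) ∘ (√·) ∘ hA.1.eigenvalues) *
  (star hA.1.eigenvectorUnitary : Matrix n n 𝕜)

namespace Matrix.PosSemidef

variable {n : Type*} [Fintype n] [DecidableEq n] {A : Matrix n n ℝ}

theorem posSemidef_sqrt (hA : A.PosSemidef) : hA.sqrt.PosSemidef := by
  unfold Matrix.PosSemidef.sqrt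
  rw [star_eq_conjTranspose]
  refine PosSemidef.mul_mul_conjTranspose_same (posSemidef_diagonal_iff.mpr fun i => ?_) _
  simp [Real.sqrt_nonneg]

theorem sqrt_mul_self (hA : A.PosSemidef) : hA.sqrt * hA.sqrt = A := by
  set U : Matrix n n ℝ := (hA.1.eigenvectorUnitary : Matrix n n ℝ)
  have hU : star U * U = 1 := mem_unitaryGroup_iff'.mp hA.1.eigenvectorUnitary.2
  have hD : diagonal ((RCLike.ofReal ∘ (√·) ∘ hA.1.eigenvalues : n → ℝ)) *
      diagonal (RCLike.ofReal ∘ (√·) ∘ hA.1.eigenvalues) =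
      diagonal (RCLike.ofReal ∘ hA.1.eigenvalues) := by
    rw [diagonal_mul_diagonal]
    congr 1
    funext i
    simp [Real.mul_self_sqrt (hA.eigenvalues_nonneg i)]
  conv_rhs => rw [hA.1.spectral_theorem, Unitary.conjStarAlgAut_apply]
  calc hA.sqrt * hA.sqrt
      = U * (diagonal (RCLike.ofReal ∘ (√·) ∘ hA.1.eigenvalues) * (star U * U) *
          diagonal (RCLike.ofReal ∘ (√·) ∘ hA.1.eigenvalues)) * star U := by
        simp only [Matrix.PosSemidef.sqrt, Matrix.mul_assoc]; rfl
    _ = _ := by rw [hU, Matrix.mul_one, hD]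

theorem transpose_sqrt (hA : A.PosSemidef) : hA.sqrtᵀ = hA.sqrt := by
  rw [← conjTranspose_eq_transpose_of_trivial]
  exact hA.posSemidef_sqrt.isHermitian

end Matrix.PosSemidef

theorem tendsto_div_add_nhdsGT_zero (d : ℝ) :
    Tendsto (fun c => c / (c + d)) (𝓝[>] 0) (𝓝 (if d = 0 then 1 else 0)) := by
  split_ifs with hd
  · subst hd
    refine tendsto_const_nhds.congr' (eventually_nhdsWithin_of_forall fun c hc => ?_)
    show 1 = c / (c + 0)
    rw [add_zero, div_self (ne_of_gt hc)]
  · have h : Tendsto (fun c : ℝ => c / (c + d)) (𝓝 0) (𝓝 (0 / (0 + d))) :=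
      tendsto_id.div (tendsto_id.add tendsto_const_nhds) (by simpa using hd)
    simpa using h.mono_left nhdsWithin_le_nhds

namespace Matrix

theorem mul_inv_smul_one_add_mul {R : Type*} [CommRing R] {m n : Type*} [Fintype m] [Fintype n]
    [DecidableEq m] [DecidableEq n] (A : Matrix m n R) (B : Matrix n m R) (c : R)
    (hAB : IsUnit (c • 1 + A * B)) (hBA : IsUnit (c • 1 + B * A)) :
    B * (c • 1 + A * B)⁻¹ = (c • 1 + B * A)⁻¹ * B := by
  rw [isUnit_iff_isUnit_det] at hAB hBA
  have hcomm : B * (c • 1 + A * B) = (c • 1 + B * A) * B := by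
    simp only [Matrix.mul_add, Matrix.add_mul, Matrix.mul_smul, Matrix.smul_mul,
      Matrix.mul_one, Matrix.one_mul, Matrix.mul_assoc]
  calc B * (c • 1 + A * B)⁻¹
      = (c • 1 + B * A)⁻¹ * ((c • 1 + B * A) * B) * (c • 1 + A * B)⁻¹ := by
        rw [← Matrix.mul_assoc, nonsing_inv_mul _ hBA, Matrix.one_mul]
    _ = (c • 1 + B * A)⁻¹ * B := by
        rw [← hcomm, Matrix.mul_assoc, Matrix.mul_assoc, mul_nonsing_inv _ hAB, Matrix.mul_one]

theorem posDef_smul_one_add_transpose_mul_self {m n : Type*} [Fintype m] [Fintype n]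
    [DecidableEq n] (A : Matrix m n ℝ) {c : ℝ} (hc : 0 < c) :
    (c • 1 + Aᵀ * A).PosDef := by
  rw [← conjTranspose_eq_transpose_of_trivial]
  exact (PosDef.one.smul hc).add_posSemidef (posSemidef_conjTranspose_mul_self A)

theorem one_sub_transpose_mul_inv_mul {m n : Type*} [Fintype m] [Fintype n] [DecidableEq m]
    [DecidableEq n] (A : Matrix m n ℝ) {c : ℝ} (hc : 0 < c) :
    1 - Aᵀ * (c • 1 + A * Aᵀ)⁻¹ * A = c • (c • 1 + Aᵀ * A)⁻¹ := by
  have hAAt := (posDef_smul_one_add_transpose_mul_self Aᵀ hc).isUnit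
  rw [transpose_transpose] at hAAt
  have hAtA := (isUnit_iff_isUnit_det _).mp (posDef_smul_one_add_transpose_mul_self A hc).isUnit
  have hinv : (c • 1 + Aᵀ * A)⁻¹ * (Aᵀ * A) = 1 - c • (c • 1 + Aᵀ * A)⁻¹ := by
    rw [← add_sub_cancel_left (c • 1) (Aᵀ * A), Matrix.mul_sub, add_sub_cancel_left,
      nonsing_inv_mul _ hAtA, Matrix.mul_smul, Matrix.mul_one]
  rw [mul_inv_smul_one_add_mul A Aᵀ c hAAt ((isUnit_iff_isUnit_det _).mpr hAtA),
    Matrix.mul_assoc, hinv, sub_sub_cancel]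

theorem trace_mul_diagonal_mul_mul {R : Type*} [CommRing R] {n : Type*} [Fintype n]
    [DecidableEq n] (U V X : Matrix n n R) (g : n → R) :
    (U * diagonal g * V * X).trace = ∑ i, g i * (V * X * U) i i := by
  rw [Matrix.mul_assoc, Matrix.mul_assoc, trace_mul_cycle', ← Matrix.mul_assoc]
  simp only [trace, diag_apply, mul_diagonal]
  exact Finset.sum_congr rfl fun i _ => mul_comm _ _

theorem conjTranspose_mul_self_apply_self_eq_zero_iff {R : Type*} [CommRing R] [PartialOrder R]
    [StarRing R] [StarOrderedRing R] [NoZeroDivisors R] {m n : Type*} [Fintype m]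
    {N : Matrix m n R} {j : n} : (Nᴴ * N) j j = 0 ↔ ∀ i, N i j = 0 := by
  rw [mul_apply']
  exact (dotProduct_star_self_eq_zero (v := fun i => N i j)).trans funext_iff

theorem rank_le_rank_diagonal_of_forall_eq_zero {K : Type*} [Field K] [DecidableEq K]
    {m n : Type*} [Fintype m] [Fintype n] [DecidableEq n] (N : Matrix m n K) (w : n → K)
    (h : ∀ j, w j = 0 → ∀ i, N i j = 0) : N.rank ≤ (diagonal w).rank := by
  have hN : N = N * diagonal w⁻¹ * diagonal w := by
    ext i j
    by_cases hj : w j = 0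
    · simp [hj, h j hj i]
    · simp [hj]
  rw [hN]
  exact rank_mul_le_right _ _

namespace IsHermitian

variable {n : Type*} [Fintype n] [DecidableEq n] {H : Matrix n n ℝ}

/-- `tr (P X)`, where `P` is the orthogonal projection onto the kernel of `H`. -/
noncomputable def traceOnKer (hH : H.IsHermitian) (X : Matrix n n ℝ) : ℝ :=
  ∑ i, if hH.eigenvalues i = 0 then
    (star (hH.eigenvectorUnitary : Matrix n n ℝ) * X * (hH.eigenvectorUnitary : Matrix n n ℝ)) i i
    else 0

theorem smul_one_add_eq_mul_diagonal_mul (hH : H.IsHermitian) (c : ℝ) :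
    c • 1 + H = (hH.eigenvectorUnitary : Matrix n n ℝ) * diagonal (fun i => c + hH.eigenvalues i) *
      star (hH.eigenvectorUnitary : Matrix n n ℝ) := by
  conv_lhs => rw [hH.spectral_theorem, Unitary.conjStarAlgAut_apply]
  rw [← diagonal_add, ← smul_one_eq_diagonal, Matrix.mul_add, Matrix.add_mul, Matrix.mul_smul,
    Matrix.mul_one, Matrix.smul_mul, mem_unitaryGroup_iff.mp hH.eigenvectorUnitary.2]
  rfl

theorem inv_smul_one_add_eq_mul_diagonal_mul (hH : H.IsHermitian) {c : ℝ} (hc : ∀ i, c + hH.eigenvalues i ≠ 0) :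
    (c • 1 + H)⁻¹ = (hH.eigenvectorUnitary : Matrix n n ℝ) *
      diagonal (fun i => (c + hH.eigenvalues i)⁻¹) * star (hH.eigenvectorUnitary : Matrix n n ℝ) := by
  refine inv_eq_left_inv ?_
  rw [hH.smul_one_add_eq_mul_diagonal_mul c]
  simp only [Matrix.mul_assoc]
  rw [← Matrix.mul_assoc (star _) _ (_ * _), UnitaryGroup.star_mul_self, Matrix.one_mul,
    ← Matrix.mul_assoc (diagonal _), diagonal_mul_diagonal,
    show (fun i => (c + hH.eigenvalues i)⁻¹ * (c + hH.eigenvalues i)) = 1 from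
      funext fun i => inv_mul_cancel₀ (hc i),
    diagonal_one', Matrix.one_mul, mem_unitaryGroup_iff.mp hH.eigenvectorUnitary.2]

theorem traceOnKer_conjTranspose_mul_self_pos (hH : H.IsHermitian) {m : Type*} [Fintype m]
    (N : Matrix m n ℝ) (hrank : H.rank < N.rank) : 0 < hH.traceOnKer (Nᴴ * N) := by
  set U : Matrix n n ℝ := (hH.eigenvectorUnitary : Matrix n n ℝ)
  set V := N * U
  have hM : star U * (Nᴴ * N) * U = Vᴴ * V := by
    simp only [V, conjTranspose_mul, star_eq_conjTranspose, Matrix.mul_assoc]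
  rw [traceOnKer, hM]
  have hnonneg : ∀ i ∈ Finset.univ,
      0 ≤ if hH.eigenvalues i = 0 then (Vᴴ * V) i i else 0 := fun i _ => by
    split_ifs
    exacts [(posSemidef_conjTranspose_mul_self V).diag_nonneg, le_rfl]
  refine (Finset.sum_nonneg hnonneg).lt_of_ne fun hsum => hrank.not_ge ?_
  have hcol : ∀ j, hH.eigenvalues j = 0 → ∀ i, V i j = 0 := fun j hj =>
    conjTranspose_mul_self_apply_self_eq_zero_iff.mp <| by
      simpa [hj] using (Finset.sum_eq_zero_iff_of_nonneg hnonneg).mp hsum.symm j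
        (Finset.mem_univ j)
  calc N.rank = V.rank := (rank_mul_eq_left_of_isUnit_det U N (UnitaryGroup.det_isUnit _)).symm
    _ ≤ (diagonal hH.eigenvalues).rank := rank_le_rank_diagonal_of_forall_eq_zero V _ hcol
    _ = H.rank := hH.rank_eq_rank_diagonal.symm

end IsHermitian

namespace PosSemidef

variable {n : Type*} [Fintype n] [DecidableEq n] {H : Matrix n n ℝ}

theorem mul_trace_inv_smul_one_add_mul (hH : H.PosSemidef) {c : ℝ} (hc : 0 < c)
    (X : Matrix n n ℝ) :
    c * ((c • 1 + H)⁻¹ * X).trace = ∑ i, c / (c + hH.1.eigenvalues i) *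
      (star (hH.1.eigenvectorUnitary : Matrix n n ℝ) * X * hH.1.eigenvectorUnitary) i i := by
  have hpos : ∀ i, 0 < c + hH.1.eigenvalues i := fun i =>
    add_pos_of_pos_of_nonneg hc (hH.eigenvalues_nonneg i)
  rw [hH.1.inv_smul_one_add_eq_mul_diagonal_mul fun i => (hpos i).ne', trace_mul_diagonal_mul_mul,
    Finset.mul_sum]
  simp only [div_eq_mul_inv, mul_assoc]

theorem tendsto_mul_trace_inv_smul_one_add_mul (hH : H.PosSemidef) (X : Matrix n n ℝ) :
    Tendsto (fun c => c * ((c • 1 + H)⁻¹ * X).trace) (𝓝[>] 0) (𝓝 (hH.1.traceOnKer X)) := by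
  refine Tendsto.congr' (eventually_nhdsWithin_of_forall fun c hc =>
    (hH.mul_trace_inv_smul_one_add_mul hc X).symm) (tendsto_finsetSum _ fun i _ => ?_)
  convert (tendsto_div_add_nhdsGT_zero (hH.1.eigenvalues i)).mul_const
    ((star (hH.1.eigenvectorUnitary : Matrix n n ℝ) * X * hH.1.eigenvectorUnitary) i i) using 2
  split_ifs <;> simp

end PosSemidef

end Matrix

noncomputable def gaussianMMSE {m n : Type*} [Fintype m] [Fintype n] [DecidableEq m]
    (Sx : Matrix n n ℝ) (Φ : Matrix m n ℝ) (σ2 : ℝ) : ℝ :=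
  (Sx - Sx * Φᵀ * (σ2 • 1 + Φ * Sx * Φᵀ)⁻¹ * Φ * Sx).trace

theorem gaussianMMSE_eq {m n : Type*} [Fintype m] [Fintype n] [DecidableEq m] [DecidableEq n]
    {Sx : Matrix n n ℝ} (hSx : Sx.PosSemidef) (Φ : Matrix m n ℝ) {σ2 : ℝ} (hσ2 : 0 < σ2) :
    gaussianMMSE Sx Φ σ2 =
      σ2 * ((σ2 • 1 + hSx.sqrt * Φᵀ * Φ * hSx.sqrt)⁻¹ * Sx).trace := by
  have hSS := hSx.sqrt_mul_self
  have hST := hSx.transpose_sqrt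
  set S := hSx.sqrt
  clear_value S
  have hfactor : Sx - Sx * Φᵀ * (σ2 • 1 + Φ * Sx * Φᵀ)⁻¹ * Φ * Sx =
      S * (1 - (Φ * S)ᵀ * (σ2 • 1 + Φ * S * (Φ * S)ᵀ)⁻¹ * (Φ * S)) * S := by
    rw [transpose_mul, hST, ← hSS]
    simp only [Matrix.mul_sub, Matrix.sub_mul, Matrix.mul_one, Matrix.mul_assoc]
  rw [gaussianMMSE, hfactor, one_sub_transpose_mul_inv_mul _ hσ2, trace_mul_cycle, hSS,
    trace_mul_comm, Matrix.smul_mul, trace_smul, smul_eq_mul, transpose_mul, hST]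
  simp only [Matrix.mul_assoc]

/-- If rank(Σ) < rank(Σ_x), with Σ = Σ_x^{1/2}·Φᵀ·Φ·Σ_x^{1/2}, then the MMSE
tends, as σ² → 0⁺, to a strictly positive error floor L > 0. -/
theorem stmt_5 {n l : ℕ} (Sx : Matrix (Fin n) (Fin n) ℝ) (hSx : Sx.PosSemidef)
    (Φ : Matrix (Fin l) (Fin n) ℝ)
    (hrank : (hSx.sqrt * Φᵀ * Φ * hSx.sqrt).rank < Sx.rank) :
    ∃ L : ℝ, 0 < L ∧
      Tendsto (fun σ2 : ℝ =>
          (Sx - Sx * Φᵀ * (σ2 • (1 : Matrix (Fin l) (Fin l) ℝ) + Φ * Sx * Φᵀ)⁻¹ * Φ * Sx).trace)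
        (nhdsWithin 0 (Set.Ioi 0)) (nhds L) := by
  have hST := hSx.transpose_sqrt
  have hSx_eq : hSx.sqrtᴴ * hSx.sqrt = Sx := by
    rw [conjTranspose_eq_transpose_of_trivial, hST, hSx.sqrt_mul_self]
  set S := hSx.sqrt
  have hSig : (S * Φᵀ * Φ * S).PosSemidef := by
    simpa [conjTranspose_eq_transpose_of_trivial, hST, Matrix.mul_assoc] using
      posSemidef_conjTranspose_mul_self (Φ * S)
  refine ⟨_, ?_, (hSig.tendsto_mul_trace_inv_smul_one_add_mul Sx).congr'
    (eventually_nhdsWithin_of_forall fun σ2 hσ2 => (gaussianMMSE_eq hSx Φ hσ2).symm)⟩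
  have hrank' : (S * Φᵀ * Φ * S).rank < S.rank := by
    rwa [← rank_conjTranspose_mul_self S, hSx_eq]
  rw [← hSx_eq]
  exact hSig.1.traceOnKer_conjTranspose_mul_self_pos S hrank'
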